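/- Reduction of the Kleene star of a rank-one perturbation: let B be an n×n max-plus matrix with Tr(B) ≤ 0, let p, q be nonzero vectors, and let θ = ⊕_{0≤i+j≤n−2}(h⁻B^i p)(q⁻B^j g) ⊕ q⁻B*p ≥ q⁻B*p. Then the Kleene star satisfies (θ^{−1} p q⁻ ⊕ B)* = ⊕_{0 ≤ i+j ≤ n−2} θ^{−1} B^i p q⁻ B^j ⊕ B*. -/

import Mathlib

noncomputable section
abbrev T := WithBot ℝ

/-- Tropical (max-plus) sum over a finite family. -/
def tSum {n : ℕ} (f : Fin n → T) : T := Finset.univ.sup f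

/-- Tropical matrix product. -/
def tMulM {m n p : ℕ} (A : Matrix (Fin m) (Fin n) T) (B : Matrix (Fin n) (Fin p) T) :
    Matrix (Fin m) (Fin p) T := fun i j => tSum fun k => A i k + B k j

/-- Tropical identity matrix. -/
def tId (n : ℕ) : Matrix (Fin n) (Fin n) T := fun i j => if i = j then (0 : T) else ⊥

/-- Tropical matrix power. -/
def tpow {n : ℕ} (A : Matrix (Fin n) (Fin n) T) : ℕ → Matrix (Fin n) (Fin n) T
  | 0 => tId n
  | k + 1 => tMulM (tpow A k) A

/-- Tropical trace. -/
def tTr {n : ℕ} (A : Matrix (Fin n) (Fin n) T) : T := tSum fun k => A k k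

/-- Multiplicative conjugate of a scalar: negation on finite entries, -∞ ↦ -∞. -/
def tconj (t : T) : T := WithBot.map (fun a : ℝ => -a) t

/-- Kleene star (for an n×n matrix): I ⊕ A ⊕ ⋯ ⊕ A^(n-1). -/
def kstar {n : ℕ} (A : Matrix (Fin n) (Fin n) T) : Matrix (Fin n) (Fin n) T :=
  fun i j => tSum fun k : Fin n => tpow A (k : ℕ) i j

/-- Tr(A) = tr A ⊕ ⋯ ⊕ tr Aⁿ. -/
def TrB {n : ℕ} (A : Matrix (Fin n) (Fin n) T) : T := tSum fun k : Fin n => tTr (tpow A ((k : ℕ) + 1))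

/-- Tropical root: t^{1/k} = t/k. -/
def tdiv (t : T) (k : ℕ) : T := WithBot.map (fun a : ℝ => a / k) t

/-- Row vector × matrix × column vector. -/
def vMv {n : ℕ} (u : Fin n → T) (A : Matrix (Fin n) (Fin n) T) (v : Fin n → T) : T :=
  tSum fun i => u i + tSum fun j => A i j + v j

/-- The rank-one matrix p q⁻. -/
def pqm {n : ℕ} (p q : Fin n → T) : Matrix (Fin n) (Fin n) T := fun i j => p i + tconj (q j)

/-- Pairs (i,j) of exponents with 0 ≤ i + j ≤ n − 2. -/
def pairSet (n : ℕ) : Finset (ℕ × ℕ) :=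
  (Finset.range n ×ˢ Finset.range n).filter (fun ij => ij.1 + ij.2 + 2 ≤ n)

/-!
Write `M = θ⁻¹ p q⁻ ⊕ B`. Expanding `Mᵏ`, every product with two or more factors `θ⁻¹ p q⁻`
contains a block `θ⁻¹ p q⁻ Bʲ θ⁻¹ p q⁻ = θ⁻¹ (q⁻ Bʲ p) · θ⁻¹ p q⁻`, and `q⁻ Bʲ p ≤ q⁻ B* p ≤ θ`,
so the block is at most `θ⁻¹ p q⁻`. By induction on `k`, `Mᵏ` is therefore bounded by `Bᵏ` plus
the single-factor terms `θ⁻¹ Bⁱ p q⁻ Bʲ` with `i + j < k`. Conversely, each such term and each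
`Bᵏ` is dominated by a power of `M` below `n`, by monotonicity of the tropical product.
-/

open Finset

lemma tconj_add_self {θ : T} (hθ : θ ≠ ⊥) : tconj θ + θ = 0 := by
  lift θ to ℝ using hθ
  simp [tconj, ← WithBot.coe_add]

section WithBot

variable {α ι : Type*} [AddCommMonoid α] [LinearOrder α] [IsOrderedAddMonoid α]

lemma add_finset_sup (c : WithBot α) (s : Finset ι) (f : ι → WithBot α) :
    c + s.sup f = s.sup fun i => c + f i :=
  apply_sup_eq_sup_comp_of_linearOrder (c + ·) (fun _ _ h => add_le_add_right h c)
    (WithBot.add_bot c)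

lemma finset_sup_add (s : Finset ι) (f : ι → WithBot α) (c : WithBot α) :
    s.sup f + c = s.sup fun i => f i + c := by
  simp only [add_comm _ c, add_finset_sup]

end WithBot

lemma max_add_max_le {α : Type*} [LinearOrder α] [Add α] {s u x y t : α} (h₁ : s + x ≤ t)
    (h₂ : s + y ≤ t) (h₃ : u + x ≤ t) (h₄ : u + y ≤ t) : max s u + max x y ≤ t := by
  rcases max_cases s u with ⟨e, _⟩ | ⟨e, _⟩ <;> rcases max_cases x y with ⟨f, _⟩ | ⟨f, _⟩ <;>
    rw [e, f] <;> assumption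

section tSum

variable {n : ℕ}

lemma le_tSum (f : Fin n → T) (i : Fin n) : f i ≤ tSum f :=
  le_sup (mem_univ i)

lemma tSum_le {f : Fin n → T} {c : T} (h : ∀ i, f i ≤ c) : tSum f ≤ c :=
  Finset.sup_le fun i _ => h i

lemma tSum_mono {f g : Fin n → T} (h : ∀ i, f i ≤ g i) : tSum f ≤ tSum g :=
  sup_mono_fun fun i _ => h i

lemma tSum_comm {m : ℕ} (f : Fin m → Fin n → T) :
    tSum (fun i => tSum fun j => f i j) = tSum (fun j => tSum fun i => f i j) :=
  Finset.sup_comm _ _ _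

lemma add_tSum (c : T) (f : Fin n → T) : c + tSum f = tSum fun i => c + f i :=
  add_finset_sup c _ f

lemma tSum_add (f : Fin n → T) (c : T) : tSum f + c = tSum fun i => f i + c :=
  finset_sup_add _ f c

end tSum

section Matrix

variable {m n r s : ℕ}

lemma tMulM_assoc (A : Matrix (Fin m) (Fin n) T) (B : Matrix (Fin n) (Fin r) T)
    (C : Matrix (Fin r) (Fin s) T) : tMulM (tMulM A B) C = tMulM A (tMulM B C) := by
  funext i j
  simp only [tMulM, tSum_add, add_tSum, add_assoc]
  exact tSum_comm _

lemma tMulM_tId (A : Matrix (Fin m) (Fin n) T) : tMulM A (tId n) = A := by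
  funext i j
  refine le_antisymm (tSum_le fun k => ?_) ?_
  · by_cases h : k = j <;> simp [tId, h]
  · simpa [tMulM, tId] using le_tSum (fun k => A i k + tId n k j) j

lemma tMulM_mono {A A' : Matrix (Fin m) (Fin n) T} {B B' : Matrix (Fin n) (Fin r) T}
    (hA : ∀ i j, A i j ≤ A' i j) (hB : ∀ i j, B i j ≤ B' i j) (i : Fin m) (j : Fin r) :
    tMulM A B i j ≤ tMulM A' B' i j :=
  tSum_mono fun k => add_le_add (hA i k) (hB k j)

lemma tMulM_const_add_right (A : Matrix (Fin m) (Fin n) T) (c : T)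
    (B : Matrix (Fin n) (Fin r) T) :
    tMulM A (fun i j => c + B i j) = fun i j => c + tMulM A B i j := by
  funext i j
  simp only [tMulM, add_tSum, add_left_comm c]

lemma tMulM_const_add_left (c : T) (A : Matrix (Fin m) (Fin n) T)
    (B : Matrix (Fin n) (Fin r) T) :
    tMulM (fun i j => c + A i j) B = fun i j => c + tMulM A B i j := by
  funext i j
  simp only [tMulM, add_tSum, add_assoc]

lemma tpow_succ (A : Matrix (Fin n) (Fin n) T) (k : ℕ) :
    tpow A (k + 1) = tMulM (tpow A k) A :=
  rfl

lemma tpow_add (A : Matrix (Fin n) (Fin n) T) (i j : ℕ) :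
    tpow A (i + j) = tMulM (tpow A i) (tpow A j) := by
  induction j with
  | zero => exact (tMulM_tId _).symm
  | succ j ih => rw [← add_assoc, tpow_succ, ih, tMulM_assoc, ← tpow_succ]

lemma tpow_mono {A A' : Matrix (Fin n) (Fin n) T} (hA : ∀ i j, A i j ≤ A' i j) (k : ℕ)
    (i j : Fin n) : tpow A k i j ≤ tpow A' k i j := by
  induction k generalizing j with
  | zero => exact le_rfl
  | succ k ih => exact tMulM_mono (fun i => ih) hA i j

lemma tpow_le_kstar (A : Matrix (Fin n) (Fin n) T) {k : ℕ} (hk : k < n) (i j : Fin n) :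
    tpow A k i j ≤ kstar A i j :=
  le_tSum (fun l : Fin n => tpow A l i j) ⟨k, hk⟩

lemma add_tpow_add_le_vMv_kstar (u v : Fin n → T) (A : Matrix (Fin n) (Fin n) T) {k : ℕ}
    (hk : k < n) (i j : Fin n) : u i + (tpow A k i j + v j) ≤ vMv u (kstar A) v :=
  calc u i + (tpow A k i j + v j) ≤ u i + tSum fun j => kstar A i j + v j := by
        gcongr
        exact (add_le_add_left (tpow_le_kstar A hk i j) _).trans (le_tSum (fun j => _ + v j) j)
    _ ≤ vMv u (kstar A) v := le_tSum (fun i => u i + tSum fun j => kstar A i j + v j) i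

end Matrix

section RankOne

variable {n : ℕ} (B : Matrix (Fin n) (Fin n) T) (p q : Fin n → T)

def rankOnePerturb (s : T) : Matrix (Fin n) (Fin n) T :=
  fun i j => max (s + pqm p q i j) (B i j)

def mixedTerm (i j : ℕ) : Matrix (Fin n) (Fin n) T :=
  tMulM (tMulM (tpow B i) (pqm p q)) (tpow B j)

def pairsBelow (k : ℕ) : Finset (ℕ × ℕ) :=
  (range k ×ˢ range k).filter fun ij => ij.1 + ij.2 < k

lemma mem_pairsBelow {k : ℕ} {ij : ℕ × ℕ} : ij ∈ pairsBelow k ↔ ij.1 + ij.2 < k := by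
  simp only [pairsBelow, mem_filter, mem_product, mem_range]
  omega

lemma mixedTerm_zero_right (i : ℕ) : mixedTerm B p q i 0 = tMulM (tpow B i) (pqm p q) :=
  tMulM_tId _

lemma mixedTerm_succ_right (i j : ℕ) :
    mixedTerm B p q i (j + 1) = tMulM (mixedTerm B p q i j) B :=
  (tMulM_assoc _ _ _).symm

variable {B p q}

/-- The rank-one identity `p q⁻ C p q⁻ = (q⁻ C p) p q⁻`, as an inequality. -/
lemma tMulM_pqm_tMulM_add_pqm_le {m : ℕ} (A : Matrix (Fin m) (Fin n) T)
    {C : Matrix (Fin n) (Fin n) T} {θ : T} (hC : ∀ d c, tconj (q d) + (C d c + p c) ≤ θ)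
    (a : Fin m) (c b : Fin n) :
    tMulM (tMulM A (pqm p q)) C a c + pqm p q c b ≤ θ + tMulM A (pqm p q) a b := by
  simp only [tMulM, tSum_add]
  refine tSum_le fun d => tSum_le fun e => ?_
  calc A a e + pqm p q e d + C d c + pqm p q c b
      = (tconj (q d) + (C d c + p c)) + (A a e + pqm p q e b) := by
        simp only [pqm]; abel
    _ ≤ θ + tSum fun e => A a e + pqm p q e b :=
        add_le_add (hC d c) (le_tSum (fun e => A a e + pqm p q e b) e)

lemma mixedTerm_add_pqm_le {j : ℕ} {θ : T}
    (hθ : ∀ c d, tconj (q c) + (tpow B j c d + p d) ≤ θ) (i : ℕ) (a c b : Fin n) :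
    mixedTerm B p q i j a c + pqm p q c b ≤ θ + mixedTerm B p q i 0 a b := by
  rw [mixedTerm_zero_right]
  exact tMulM_pqm_tMulM_add_pqm_le _ hθ a c b

lemma mixedTerm_add_le_succ (i j : ℕ) (a c b : Fin n) :
    mixedTerm B p q i j a c + B c b ≤ mixedTerm B p q i (j + 1) a b := by
  rw [mixedTerm_succ_right]
  exact le_tSum (fun c => mixedTerm B p q i j a c + B c b) c

lemma tpow_add_pqm_le (k : ℕ) (a c b : Fin n) :
    tpow B k a c + pqm p q c b ≤ mixedTerm B p q k 0 a b := by
  rw [mixedTerm_zero_right]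
  exact le_tSum (fun c => tpow B k a c + pqm p q c b) c

lemma tpow_add_le_succ (k : ℕ) (a c b : Fin n) : tpow B k a c + B c b ≤ tpow B (k + 1) a b :=
  le_tSum (fun c => tpow B k a c + B c b) c

lemma tpow_rankOnePerturb_le {θ : T} (hθ : θ ≠ ⊥) {k : ℕ}
    (hθge : ∀ j < k, ∀ c d, tconj (q c) + (tpow B j c d + p d) ≤ θ) (a b : Fin n) :
    tpow (rankOnePerturb B p q (tconj θ)) k a b ≤
      max ((pairsBelow k).sup fun ij => tconj θ + mixedTerm B p q ij.1 ij.2 a b)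
        (tpow B k a b) := by
  induction k generalizing b with
  | zero => exact le_max_right _ _
  | succ k ih =>
    have le_sup_of_mem {i j : ℕ} (hij : i + j < k + 1) :
        tconj θ + mixedTerm B p q i j a b ≤
          (pairsBelow (k + 1)).sup fun ij => tconj θ + mixedTerm B p q ij.1 ij.2 a b :=
      Finset.le_sup_of_le (mem_pairsBelow (ij := (i, j)) |>.2 hij) le_rfl
    refine tSum_le fun c => (add_le_add_left (ih (fun j hj => hθge j (by omega)) c) _).trans
      (max_add_max_le ?mixed_pqm ?mixed_B ?pow_pqm ?pow_B)
    case mixed_pqm =>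
      rw [finset_sup_add]
      refine Finset.sup_le fun ⟨i, j⟩ hij => le_max_of_le_left ?_
      have hij := mem_pairsBelow.1 hij
      calc tconj θ + mixedTerm B p q i j a c + (tconj θ + pqm p q c b)
          = tconj θ + (tconj θ + (mixedTerm B p q i j a c + pqm p q c b)) := by abel
        _ ≤ tconj θ + (tconj θ + (θ + mixedTerm B p q i 0 a b)) :=
          add_le_add_right (add_le_add_right
            (mixedTerm_add_pqm_le (hθge j (by omega)) i a c b) _) _
        _ = tconj θ + mixedTerm B p q i 0 a b := by
          rw [← add_assoc (tconj θ) θ, tconj_add_self hθ, zero_add]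
        _ ≤ _ := le_sup_of_mem (by omega)
    case mixed_B =>
      rw [finset_sup_add]
      refine Finset.sup_le fun ⟨i, j⟩ hij => le_max_of_le_left ?_
      have hij := mem_pairsBelow.1 hij
      rw [add_assoc]
      exact (add_le_add_right (mixedTerm_add_le_succ i j a c b) _).trans
        (le_sup_of_mem (by omega))
    case pow_pqm =>
      refine le_max_of_le_left ((le_of_eq (add_left_comm _ _ _)).trans ?_)
      exact (add_le_add_right (tpow_add_pqm_le k a c b) _).trans (le_sup_of_mem (by omega))
    case pow_B => exact le_max_of_le_right (tpow_add_le_succ k a c b)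

lemma kstar_rankOnePerturb_le {θ : T} (hθ : θ ≠ ⊥)
    (hθge : ∀ j < n, ∀ c d, tconj (q c) + (tpow B j c d + p d) ≤ θ) (a b : Fin n) :
    kstar (rankOnePerturb B p q (tconj θ)) a b ≤
      max ((pairSet n).sup fun ij => tconj θ + mixedTerm B p q ij.1 ij.2 a b) (kstar B a b) := by
  refine tSum_le fun k => (tpow_rankOnePerturb_le hθ (fun j hj => hθge j (by omega)) a b).trans
    (max_le_max (sup_mono fun ij hij => ?_) (tpow_le_kstar B k.isLt a b))
  have := mem_pairsBelow.1 hij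
  simp only [pairSet, mem_filter, mem_product, mem_range]
  omega

lemma const_add_mixedTerm_le_tpow {M : Matrix (Fin n) (Fin n) T} {s : T}
    (hB : ∀ i j, B i j ≤ M i j) (hpq : ∀ i j, s + pqm p q i j ≤ M i j) (i j : ℕ) (a b : Fin n) :
    s + mixedTerm B p q i j a b ≤ tpow M (i + 1 + j) a b := by
  have h : s + mixedTerm B p q i j a b =
      tMulM (tMulM (tpow B i) fun c d => s + pqm p q c d) (tpow B j) a b := by
    rw [tMulM_const_add_right, tMulM_const_add_left, mixedTerm]
  rw [h, tpow_add, tpow_succ]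
  exact tMulM_mono (tMulM_mono (tpow_mono hB i) hpq) (tpow_mono hB j) a b

lemma le_kstar_rankOnePerturb (s : T) (a b : Fin n) :
    max ((pairSet n).sup fun ij => s + mixedTerm B p q ij.1 ij.2 a b) (kstar B a b) ≤
      kstar (rankOnePerturb B p q s) a b := by
  have hB : ∀ i j, B i j ≤ rankOnePerturb B p q s i j := fun _ _ => le_max_right _ _
  refine max_le (Finset.sup_le fun ⟨i, j⟩ hij => ?_) (tSum_mono fun k => tpow_mono hB k a b)
  simp only [pairSet, mem_filter, mem_product, mem_range] at hij
  exact (const_add_mixedTerm_le_tpow hB (fun _ _ => le_max_left _ _) i j a b).trans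
    (tpow_le_kstar _ (by omega) a b)

end RankOne

theorem tropical_kleene_star_rank_one_perturbation_general {n : ℕ}
    (B : Matrix (Fin n) (Fin n) T) (p q : Fin n → T) (g : Fin n → T) (h : Fin n → ℝ)
    (θ : T)
    (hθdef : θ = max
      ((pairSet n).sup fun ij =>
        vMv (fun l => ((-(h l) : ℝ) : T)) (tpow B ij.1) p +
          vMv (fun l => tconj (q l)) (tpow B ij.2) g)
      (vMv (fun l => tconj (q l)) (kstar B) p))
    (hθ : θ ≠ ⊥) :
    ∀ a b : Fin n,
      kstar (fun i j => max (tconj θ + (p i + tconj (q j))) (B i j)) a b =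
        max ((pairSet n).sup fun ij =>
            tconj θ + tMulM (tMulM (tpow B ij.1) (pqm p q)) (tpow B ij.2) a b)
          (kstar B a b) := by
  have hθge : ∀ j < n, ∀ c d, tconj (q c) + (tpow B j c d + p d) ≤ θ := fun j hj c d => by
    rw [hθdef]
    exact le_max_of_le_right (add_tpow_add_le_vMv_kstar (fun l => tconj (q l)) p B hj c d)
  intro a b
  exact le_antisymm (kstar_rankOnePerturb_le hθ hθge a b) (le_kstar_rankOnePerturb _ a b)

/-- Kleene star of the rank-one perturbation:
(θ⁻¹ p q⁻ ⊕ B)* = ⊕_{0 ≤ i+j ≤ n−2} θ⁻¹ B^i p q⁻ B^j ⊕ B*. -/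
theorem tropical_kleene_star_rank_one_perturbation {n : ℕ}
    (B : Matrix (Fin n) (Fin n) T) (p q : Fin n → T) (g : Fin n → T) (h : Fin n → ℝ)
    (hp : ∃ i, p i ≠ ⊥) (hq : ∃ i, q i ≠ ⊥) (hTr : TrB B ≤ 0)
    (θ : T)
    (hθdef : θ = max
      ((pairSet n).sup fun ij =>
        vMv (fun l => ((-(h l) : ℝ) : T)) (tpow B ij.1) p +
          vMv (fun l => tconj (q l)) (tpow B ij.2) g)
      (vMv (fun l => tconj (q l)) (kstar B) p))
    (hθ : θ ≠ ⊥) :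
    ∀ a b : Fin n,
      kstar (fun i j => max (tconj θ + (p i + tconj (q j))) (B i j)) a b =
        max ((pairSet n).sup fun ij =>
            tconj θ + tMulM (tMulM (tpow B ij.1) (pqm p q)) (tpow B ij.2) a b)
          (kstar B a b) :=
  tropical_kleene_star_rank_one_perturbation_general B p q g h θ hθdef hθ
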